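/- Let ω̃ ∈ ℂ. Let x₁, y₂ : ℝ → ℂ be differentiable with y₂(t) ≠ 0 for all t, satisfying x₁' = 2y₂ − ω̃·x₁ and y₂' = −ω̃·y₂. Then the function t ↦ 2·y₂(t)·exp( ω̃·x₁(t) / (2·y₂(t)) ) is constant on ℝ. -/

import Mathlib

/-- The first integral `I₁ = 2y₂·exp(ω̃x₁/(2y₂))` from Case (ii) of
Proposition 6 of the paper, valid along solutions of the subsystem
`x₁' = 2y₂ − ω̃x₁`, `y₂' = −ω̃y₂`. -/
theorem first_integral_I1 (ω : ℂ)
    (x₁ y₂ : ℝ → ℂ) (hy : ∀ t, y₂ t ≠ 0)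
    (hx₁ : ∀ t, HasDerivAt x₁ (2 * y₂ t - ω * x₁ t) t)
    (hy₂ : ∀ t, HasDerivAt y₂ (-(ω * y₂ t)) t) :
    ∀ s t : ℝ,
      2 * y₂ s * Complex.exp (ω * x₁ s / (2 * y₂ s))
        = 2 * y₂ t * Complex.exp (ω * x₁ t / (2 * y₂ t)) := by
  set f : ℝ → ℂ := fun t => 2 * y₂ t * Complex.exp (ω * x₁ t / (2 * y₂ t)) with hf
  have key : ∀ t, HasDerivAt f 0 t := by
    intro t
    have hden : (2 : ℂ) * y₂ t ≠ 0 := by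
      simp [hy t]
    have hq : HasDerivAt (fun t => ω * x₁ t / (2 * y₂ t))
        ((ω * (2 * y₂ t - ω * x₁ t) * (2 * y₂ t) - ω * x₁ t * (2 * (-(ω * y₂ t)))) /
          (2 * y₂ t) ^ 2) t :=
      HasDerivAt.div ((hx₁ t).const_mul ω) ((hy₂ t).const_mul 2) hden
    have hq' : ((ω * (2 * y₂ t - ω * x₁ t) * (2 * y₂ t) - ω * x₁ t * (2 * (-(ω * y₂ t)))) /
          (2 * y₂ t) ^ 2) = ω := by
      field_simp
      rw [div_eq_iff (hy t)]
      ring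
    rw [hq'] at hq
    have hexp : HasDerivAt (fun t => Complex.exp (ω * x₁ t / (2 * y₂ t)))
        (Complex.exp (ω * x₁ t / (2 * y₂ t)) * ω) t := hq.cexp
    have : HasDerivAt (fun t => 2 * y₂ t * Complex.exp (ω * x₁ t / (2 * y₂ t)))
        (2 * -(ω * y₂ t) * Complex.exp (ω * x₁ t / (2 * y₂ t)) + 2 * y₂ t * (Complex.exp (ω * x₁ t / (2 * y₂ t)) * ω)) t :=
      ((hy₂ t).const_mul 2).mul hexp
    convert this using 1
    ring
  intro s t
  have := is_const_of_deriv_eq_zero (fun t => (key t).differentiableAt)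
    (fun t => (key t).deriv) s t
  simpa [hf] using this
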